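/- Let V be a finite-dimensional real vector space, p ≥ 1, and let Q be a symmetric bilinear form on V. Let G_p(Q) be the symmetric bilinear form on ⋀^p V determined on decomposable vectors by G_p(Q)(v_1 ∧ … ∧ v_p, w_1 ∧ … ∧ w_p) = det(Q(v_i, w_j))_{i,j=1}^p; equivalently, G_p(Q)(x, y) = ⟨(⋀^p Q♭)(x), y⟩ where Q♭ : V → V^* is v ↦ Q(v, ·) and ⟨·,·⟩ is the canonical pairing of ⋀^p V^* with ⋀^p V (G_p(Q) equals the wedge power Q^{∧p} up to the factor p!). Then G_p(Q) ∈ A_p(V), i.e., G_p(Q) pairs to zero with every element of Z_p(V^*). -/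

import Mathlib

open ExteriorAlgebra Module

variable (p : ℕ) (V : Type*) [AddCommGroup V] [Module ℝ V] [FiniteDimensional ℝ V]

instance extPower_finite : Module.Finite ℝ ↥(⋀[ℝ]^p V) := by
  refine Module.Finite.iff_fg.mpr (Submodule.FG.pow ?_ p)
  rw [← Submodule.map_top]
  exact (Module.finite_def.mp inferInstance).map _

/-- The decomposable (wedge) vector `v 1 ∧ ⋯ ∧ v p` in the `p`-th exterior power of `V`. -/
noncomputable def wedge (v : Fin p → V) : ↥(⋀[ℝ]^p V) :=
  ⟨ExteriorAlgebra.ιMulti ℝ p v, ExteriorAlgebra.ιMulti_range ℝ p (Set.mem_range_self v)⟩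

/-- The canonical lift of an alternating `p`-form on `V` (with values in `N`) to a linear map
on the `p`-th exterior power of `V`, bundled as a linear map. -/
noncomputable def liftAltPower {N : Type*} [AddCommGroup N] [Module ℝ N] :
    (AlternatingMap ℝ V N (Fin p)) →ₗ[ℝ] (↥(⋀[ℝ]^p V) →ₗ[ℝ] N) where
  toFun g := (ExteriorAlgebra.liftAlternating (Pi.single p g)) ∘ₗ (⋀[ℝ]^p V).subtype
  map_add' g h := by
    show ExteriorAlgebra.liftAlternating (Pi.single p (g + h)) ∘ₗ (⋀[ℝ]^p V).subtype = _
    rw [Pi.single_add, map_add, LinearMap.add_comp]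
  map_smul' c g := by
    show ExteriorAlgebra.liftAlternating (Pi.single p (c • g)) ∘ₗ (⋀[ℝ]^p V).subtype = _
    rw [Pi.single_smul, map_smul, LinearMap.smul_comp]
    rfl

/-- The image of the decomposable element `f 1 ∧ ⋯ ∧ f p` of `⋀^p (V^*)` under the canonical
identification of `⋀^p (V^*)` with the dual space of `⋀^p V` (it is the linear functional
determined by `v₁ ∧ ⋯ ∧ v_p ↦ det (f i (v j))`). -/
noncomputable def dualWedge (f : Fin p → Module.Dual ℝ V) : Module.Dual ℝ ↥(⋀[ℝ]^p V) :=
  liftAltPower p V (Matrix.detRowAlternating.compLinearMap (LinearMap.pi f))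

/-- `Y_p(V)`: the space of symmetric bilinear forms on `⋀^p V`, as a submodule of the space of
all bilinear forms on `⋀^p V`. -/
noncomputable def Yp : Submodule ℝ (↥(⋀[ℝ]^p V) →ₗ[ℝ] ↥(⋀[ℝ]^p V) →ₗ[ℝ] ℝ) where
  carrier := {B | ∀ x y, B x y = B y x}
  add_mem' := by intro B C hB hC x y; simp [hB x y, hC x y]
  zero_mem' := by intro x y; simp
  smul_mem' := by intro c B hB x y; simp [hB x y]

/-- `Z_p(V)`: the space of symmetric bilinear forms on `⋀^p V` whose associated quadratic form
vanishes on all decomposable vectors. -/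
noncomputable def Zp : Submodule ℝ (↥(⋀[ℝ]^p V) →ₗ[ℝ] ↥(⋀[ℝ]^p V) →ₗ[ℝ] ℝ) where
  carrier := {B | (∀ x y, B x y = B y x) ∧ ∀ v : Fin p → V, B (wedge p V v) (wedge p V v) = 0}
  add_mem' := by
    intro B C hB hC
    exact ⟨fun x y => by simp [hB.1 x y, hC.1 x y], fun v => by simp [hB.2 v, hC.2 v]⟩
  zero_mem' := ⟨fun x y => by simp, fun v => by simp⟩
  smul_mem' := by
    intro c B hB
    exact ⟨fun x y => by simp [hB.1 x y], fun v => by simp [hB.2 v]⟩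

/-- `Z_p(V^*)`: the space of symmetric bilinear forms on `⋀^p (V^*)` (realized, via the
canonical finite-dimensional identification, on the dual space of `⋀^p V`) whose associated
quadratic form vanishes on all decomposable vectors of `⋀^p (V^*)`. -/
noncomputable def ZpDual : Submodule ℝ
    (Module.Dual ℝ ↥(⋀[ℝ]^p V) →ₗ[ℝ] Module.Dual ℝ ↥(⋀[ℝ]^p V) →ₗ[ℝ] ℝ) where
  carrier := {C | (∀ x y, C x y = C y x) ∧
    ∀ f : Fin p → Module.Dual ℝ V, C (dualWedge p V f) (dualWedge p V f) = 0}
  add_mem' := by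
    intro B C hB hC
    exact ⟨fun x y => by simp [hB.1 x y, hC.1 x y], fun v => by simp [hB.2 v, hC.2 v]⟩
  zero_mem' := ⟨fun x y => by simp, fun v => by simp⟩
  smul_mem' := by
    intro c B hB
    exact ⟨fun x y => by simp [hB.1 x y], fun v => by simp [hB.2 v]⟩

/-- The perfect-duality pairing `⟨B, C⟩ = tr (B̂ ∘ Ĉ)` between bilinear forms on `⋀^p V` and
bilinear forms on `⋀^p (V^*)` (the latter realized on the dual of `⋀^p V` via the canonical
finite-dimensional identification, and `Ĉ : (⋀^p V)^* → ⋀^p V` being obtained from `C` using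
the canonical identification of a finite-dimensional space with its double dual). -/
noncomputable def pairingY
    (B : ↥(⋀[ℝ]^p V) →ₗ[ℝ] ↥(⋀[ℝ]^p V) →ₗ[ℝ] ℝ)
    (C : Module.Dual ℝ ↥(⋀[ℝ]^p V) →ₗ[ℝ] Module.Dual ℝ ↥(⋀[ℝ]^p V) →ₗ[ℝ] ℝ) : ℝ :=
  LinearMap.trace ℝ ↥(⋀[ℝ]^p V)
    ((Module.evalEquiv ℝ ↥(⋀[ℝ]^p V)).symm.toLinearMap ∘ₗ C ∘ₗ B)

/-- `A_p(V)`: the subspace of symmetric bilinear forms on `⋀^p V` annihilating `Z_p(V^*)`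
under the canonical perfect-duality pairing. -/
noncomputable def Ap : Submodule ℝ (↥(⋀[ℝ]^p V) →ₗ[ℝ] ↥(⋀[ℝ]^p V) →ₗ[ℝ] ℝ) where
  carrier := {B | (∀ x y, B x y = B y x) ∧ ∀ C ∈ ZpDual p V, pairingY p V B C = 0}
  add_mem' := by
    intro B B' hB hB'
    refine ⟨fun x y => by simp [hB.1 x y, hB'.1 x y], fun C hC => ?_⟩
    have h : pairingY p V (B + B') C = pairingY p V B C + pairingY p V B' C := by
      simp [pairingY, LinearMap.comp_add, LinearMap.add_comp, map_add]
    rw [h, hB.2 C hC, hB'.2 C hC, add_zero]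
  zero_mem' := by
    refine ⟨fun x y => by simp, fun C hC => ?_⟩
    simp [pairingY]
  smul_mem' := by
    intro c B hB
    refine ⟨fun x y => by simp [hB.1 x y], fun C hC => ?_⟩
    have h : pairingY p V (c • B) C = c * pairingY p V B C := by
      simp [pairingY, LinearMap.comp_smul, LinearMap.smul_comp, map_smul]
    rw [h, hB.2 C hC, mul_zero]

variable {V}

lemma detForm_update (f : Fin p → Module.Dual ℝ V) (i : Fin p) (c : Module.Dual ℝ V)
    (w : Fin p → V) :
    (Matrix.of fun j i' => (Function.update f i c) i' (w j)) =
      (Matrix.of fun j i' => f i' (w j)).updateCol i (fun j => c (w j)) := by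
  ext j i'
  rcases eq_or_ne i' i with h | h <;>
    simp [Matrix.updateCol_apply, Function.update_apply, h]

lemma detForm_update_add (f : Fin p → Module.Dual ℝ V) (i : Fin p)
    (c c' : Module.Dual ℝ V) :
    (Matrix.detRowAlternating.compLinearMap (LinearMap.pi (Function.update f i (c + c'))) :
        AlternatingMap ℝ V ℝ (Fin p)) =
      Matrix.detRowAlternating.compLinearMap (LinearMap.pi (Function.update f i c)) +
        Matrix.detRowAlternating.compLinearMap (LinearMap.pi (Function.update f i c')) := by
  ext w
  simp only [AlternatingMap.compLinearMap_apply, AlternatingMap.add_apply]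
  show Matrix.det (Matrix.of fun j i' => (Function.update f i (c + c')) i' (w j)) =
    Matrix.det (Matrix.of fun j i' => (Function.update f i c) i' (w j)) +
      Matrix.det (Matrix.of fun j i' => (Function.update f i c') i' (w j))
  rw [detForm_update, detForm_update, detForm_update]
  have h : (fun j => (c + c') (w j)) = (fun j => c (w j)) + (fun j => c' (w j)) := rfl
  rw [h, Matrix.det_updateCol_add]

lemma detForm_update_smul (f : Fin p → Module.Dual ℝ V) (i : Fin p) (r : ℝ)
    (c : Module.Dual ℝ V) :
    (Matrix.detRowAlternating.compLinearMap (LinearMap.pi (Function.update f i (r • c))) :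
        AlternatingMap ℝ V ℝ (Fin p)) =
      r • Matrix.detRowAlternating.compLinearMap (LinearMap.pi (Function.update f i c)) := by
  ext w
  simp only [AlternatingMap.compLinearMap_apply, AlternatingMap.smul_apply]
  show Matrix.det (Matrix.of fun j i' => (Function.update f i (r • c)) i' (w j)) =
    r • Matrix.det (Matrix.of fun j i' => (Function.update f i c) i' (w j))
  rw [detForm_update, detForm_update]
  have h : (fun j => (r • c) (w j)) = r • (fun j => c (w j)) := rfl
  rw [h, Matrix.det_updateCol_smul]
  rfl

lemma detForm_eq_zero (f : Fin p → Module.Dual ℝ V) (i j : Fin p)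
    (h : f i = f j) (hne : i ≠ j) :
    (Matrix.detRowAlternating.compLinearMap (LinearMap.pi f) :
      AlternatingMap ℝ V ℝ (Fin p)) = 0 := by
  ext w
  simp only [AlternatingMap.compLinearMap_apply, AlternatingMap.zero_apply]
  show Matrix.det (Matrix.of fun j' i' => f i' (w j')) = 0
  exact Matrix.det_zero_of_column_eq hne (fun k => by simp [h])

lemma update_irrel {β : Type*} [inst : DecidableEq (Fin p)] (f : Fin p → β) (i : Fin p)
    (x : β) :
    @Function.update _ _ inst f i x = @Function.update _ _ (instDecidableEqFin p) f i x := by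
  have h : inst = instDecidableEqFin p := Subsingleton.elim _ _
  rw [h]

/-- For a bilinear form `Q` on `V` (given as `Q : V →ₗ V^*`), the alternating map
`v ↦ (the functional canonically associated to (Q♭ (v 1)) ∧ ⋯ ∧ (Q♭ (v p)))`, whose lift over
`⋀^p V` is the Gram power `G_p(Q)`. -/
noncomputable def gramAlt (Q : V →ₗ[ℝ] Module.Dual ℝ V) :
    AlternatingMap ℝ V (Module.Dual ℝ ↥(⋀[ℝ]^p V)) (Fin p) where
  toFun v := dualWedge p V (fun i => Q (v i))
  map_update_add' v i a b := by
    have h : ∀ x : V, (fun i' => Q (Function.update v i x i')) =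
        Function.update (fun i' => Q (v i')) i (Q x) :=
      fun x => Function.comp_update (⇑Q) v i x
    beta_reduce
    rw [h (a + b), h a, h b]
    simp only [update_irrel]
    rw [map_add]
    unfold dualWedge
    rw [detForm_update_add, map_add]
  map_update_smul' v i r a := by
    have h : ∀ x : V, (fun i' => Q (Function.update v i x i')) =
        Function.update (fun i' => Q (v i')) i (Q x) :=
      fun x => Function.comp_update (⇑Q) v i x
    beta_reduce
    rw [h (r • a), h a]
    simp only [update_irrel]
    rw [map_smul]
    unfold dualWedge
    rw [detForm_update_smul, map_smul]
  map_eq_zero_of_eq' v i j hv hne := by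
    show (liftAltPower p V)
      (Matrix.detRowAlternating.compLinearMap (LinearMap.pi fun i' => Q (v i'))) = 0
    rw [detForm_eq_zero p (fun i' => Q (v i')) i j (by show Q (v i) = Q (v j); rw [hv]) hne, map_zero]

/-- The `p`-th Gram power `G_p(Q)` of a bilinear form `Q` on `V`: the bilinear form on `⋀^p V`
determined on decomposable vectors by
`G_p(Q)(v₁ ∧ ⋯ ∧ v_p, w₁ ∧ ⋯ ∧ w_p) = det (Q (v i) (w j))`; equivalently,
`G_p(Q)(x, y) = ⟨(⋀^p Q♭)(x), y⟩`. -/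
noncomputable def gramPower (Q : V →ₗ[ℝ] Module.Dual ℝ V) :
    ↥(⋀[ℝ]^p V) →ₗ[ℝ] Module.Dual ℝ ↥(⋀[ℝ]^p V) :=
  liftAltPower p V (gramAlt p Q)

variable (V)


section Aux

variable {V}

lemma liftAltPower_wedge {N : Type*} [AddCommGroup N] [Module ℝ N]
    (g : AlternatingMap ℝ V N (Fin p)) (v : Fin p → V) :
    liftAltPower p V g (wedge p V v) = g v := by
  show ExteriorAlgebra.liftAlternating (Pi.single p g) (ExteriorAlgebra.ιMulti ℝ p v) = g v
  rw [ExteriorAlgebra.liftAlternating_apply_ιMulti, Pi.single_eq_same]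

lemma dualWedge_wedge (f : Fin p → Module.Dual ℝ V) (v : Fin p → V) :
    dualWedge p V f (wedge p V v) = Matrix.det (Matrix.of fun j i => f i (v j)) := by
  unfold dualWedge
  rw [liftAltPower_wedge]
  rfl

lemma gramPower_wedge (Q : V →ₗ[ℝ] Module.Dual ℝ V) (v : Fin p → V) :
    gramPower p Q (wedge p V v) = dualWedge p V (fun i => Q (v i)) := by
  unfold gramPower
  rw [liftAltPower_wedge]
  rfl

lemma wedge_span : Submodule.span ℝ (Set.range (wedge p V)) = ⊤ := by
  rw [Submodule.eq_top_iff']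
  intro x
  have hx : (x : ExteriorAlgebra ℝ V) ∈
      Submodule.span ℝ (Set.range (ExteriorAlgebra.ιMulti ℝ p (M := V))) := by
    rw [ExteriorAlgebra.ιMulti_span_fixedDegree]; exact x.2
  have himg : Set.range (ExteriorAlgebra.ιMulti ℝ p (M := V)) =
      (⋀[ℝ]^p V).subtype '' Set.range (wedge p V) := by
    ext y
    constructor
    · rintro ⟨v, rfl⟩; exact ⟨wedge p V v, ⟨v, rfl⟩, rfl⟩
    · rintro ⟨z, ⟨v, rfl⟩, rfl⟩; exact ⟨v, rfl⟩
  rw [himg, ← Submodule.map_span] at hx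
  obtain ⟨y, hy, hxy⟩ := hx
  rwa [show y = x from Subtype.ext hxy] at hy

lemma gramPower_symm (Q : V →ₗ[ℝ] V →ₗ[ℝ] ℝ) (hQ : ∀ x y : V, Q x y = Q y x)
    (x y : ↥(⋀[ℝ]^p V)) : gramPower p Q x y = gramPower p Q y x := by
  have hx : x ∈ Submodule.span ℝ (Set.range (wedge p V)) := by
    rw [wedge_span]; exact Submodule.mem_top
  have hy : y ∈ Submodule.span ℝ (Set.range (wedge p V)) := by
    rw [wedge_span]; exact Submodule.mem_top
  induction hx, hy using Submodule.span_induction₂ with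
  | mem_mem a b ha hb =>
    obtain ⟨v, rfl⟩ := ha
    obtain ⟨w, rfl⟩ := hb
    rw [gramPower_wedge, gramPower_wedge, dualWedge_wedge, dualWedge_wedge]
    rw [← Matrix.det_transpose]
    congr 1
    ext j i
    exact hQ (v j) (w i)
  | zero_left b hb => simp
  | zero_right a ha => simp
  | add_left a b c ha hb hc h1 h2 => simp [h1, h2]
  | add_right a b c ha hb hc h1 h2 => simp [h1, h2]
  | smul_left r a b ha hb h => simp [h]
  | smul_right r a b ha hb h => simp [h]

lemma dualWedge_smul_family (c : Fin p → ℝ) (f : Fin p → Module.Dual ℝ V) :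
    dualWedge p V (fun i => c i • f i) = (∏ i, c i) • dualWedge p V f := by
  unfold dualWedge
  rw [← map_smul]
  congr 1
  ext w
  show Matrix.det (Matrix.of fun j i => (c i • f i) (w j)) =
    ((∏ i, c i) • (Matrix.detRowAlternating.compLinearMap (LinearMap.pi f) :
      AlternatingMap ℝ V ℝ (Fin p))) w
  have h := Matrix.det_mul_row c (Matrix.of fun j i => f i (w j))
  exact h

lemma dualWedge_fam {n : ℕ} (e : Basis (Fin n) ℝ V)
    (s t : {s : Finset (Fin n) // s.card = p}) :
    dualWedge p V (fun i => e.coord (t.1.orderEmbOfFin t.2 i))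
      (wedge p V (fun i => e (s.1.orderEmbOfFin s.2 i))) = if t = s then 1 else 0 := by
  rw [dualWedge_wedge]
  have hentry : ∀ j i, (e.coord (t.1.orderEmbOfFin t.2 i)) (e (s.1.orderEmbOfFin s.2 j)) =
      if s.1.orderEmbOfFin s.2 j = t.1.orderEmbOfFin t.2 i then 1 else 0 := by
    intro j i
    rw [Basis.coord_apply, Basis.repr_self, Finsupp.single_apply]
  rcases eq_or_ne t s with h | h
  · subst h
    rw [if_pos rfl]
    have : (Matrix.of fun j i => (e.coord (t.1.orderEmbOfFin t.2 i))
        (e (t.1.orderEmbOfFin t.2 j))) = 1 := by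
      ext j i
      rw [Matrix.of_apply, hentry, Matrix.one_apply]
      congr 1
      simp [Function.Injective.eq_iff (t.1.orderEmbOfFin t.2).injective, eq_comm]
    rw [this, Matrix.det_one]
  · rw [if_neg h]
    have hne : ¬ t.1 ⊆ s.1 := by
      intro hsub
      exact h (Subtype.ext (Finset.eq_of_subset_of_card_le hsub (by rw [s.2, t.2])))
    obtain ⟨a, hat, has⟩ := Finset.not_subset.mp hne
    have : a ∈ Set.range (t.1.orderEmbOfFin t.2) := by
      rw [Finset.range_orderEmbOfFin]; exact hat
    obtain ⟨i0, hi0⟩ := this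
    apply Matrix.det_eq_zero_of_column_eq_zero i0
    intro j
    rw [Matrix.of_apply, hentry, if_neg]
    rw [hi0]
    intro hcontra
    exact has (hcontra ▸ Finset.orderEmbOfFin_mem s.1 s.2 j)

lemma fam_linearIndependent {n : ℕ} (e : Basis (Fin n) ℝ V) :
    LinearIndependent ℝ (fun s : {s : Finset (Fin n) // s.card = p} =>
      wedge p V (fun i => e (s.1.orderEmbOfFin s.2 i))) := by
  rw [Fintype.linearIndependent_iff]
  intro c hc t
  have h := congrArg (dualWedge p V (fun i => e.coord (t.1.orderEmbOfFin t.2 i))) hc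
  rw [map_sum, map_zero] at h
  simpa [dualWedge_fam] using h

lemma wedge_expand {n : ℕ} (e : Basis (Fin n) ℝ V) (v : Fin p → V) :
    wedge p V v = ∑ g : Fin p → Fin n,
      (∏ i, e.repr (v i) (g i)) • wedge p V (fun i => e (g i)) := by
  apply Subtype.ext
  push_cast [Submodule.coe_sum]
  show ExteriorAlgebra.ιMulti ℝ p v = ∑ g : Fin p → Fin n,
      (∏ i, e.repr (v i) (g i)) • ExteriorAlgebra.ιMulti ℝ p (fun i => e (g i))
  have hv : v = fun i => ∑ j : Fin n, e.repr (v i) j • e j :=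
    funext fun i => (e.sum_repr (v i)).symm
  conv_lhs => rw [hv]
  rw [show (ExteriorAlgebra.ιMulti ℝ p (M := V)) (fun i => ∑ j : Fin n,
      e.repr (v i) j • e j) = (ExteriorAlgebra.ιMulti ℝ p (M := V)).toMultilinearMap
      (fun i => ∑ j : Fin n, e.repr (v i) j • e j) from rfl]
  rw [MultilinearMap.map_sum]
  refine Finset.sum_congr rfl fun g _ => ?_
  exact MultilinearMap.map_smul_univ _ (fun i => e.repr (v i) (g i)) (fun i => e (g i))

lemma wedge_basis_vec_mem {n : ℕ} (e : Basis (Fin n) ℝ V) (g : Fin p → Fin n) :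
    wedge p V (fun i => e (g i)) ∈ Submodule.span ℝ
      (Set.range (fun s : {s : Finset (Fin n) // s.card = p} =>
        wedge p V (fun i => e (s.1.orderEmbOfFin s.2 i)))) := by
  by_cases hg : Function.Injective g
  · set S : Finset (Fin n) := Finset.image g Finset.univ with hS
    have hcard : S.card = p := by
      rw [hS, Finset.card_image_of_injective _ hg, Finset.card_univ, Fintype.card_fin]
    have hmem : ∀ i, g i ∈ S := fun i => Finset.mem_image_of_mem g (Finset.mem_univ i)
    set σ : Fin p → Fin p := fun i => (S.orderIsoOfFin hcard).symm ⟨g i, hmem i⟩ with hσ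
    have h1 : ∀ k, ((S.orderIsoOfFin hcard) (σ k) : Fin n) = g k := fun k => by
      show (((S.orderIsoOfFin hcard) ((S.orderIsoOfFin hcard).symm ⟨g k, hmem k⟩)) : Fin n) = g k
      rw [OrderIso.apply_symm_apply]
    have hσinj : Function.Injective σ := by
      intro i j hij
      apply hg
      rw [← h1 i, ← h1 j, hij]
    let σe : Equiv.Perm (Fin p) :=
      Equiv.ofBijective σ ((Finite.injective_iff_bijective).mp hσinj)
    have hcomp : (fun i => e (g i)) =
        (fun i => e (S.orderEmbOfFin hcard i)) ∘ σe := by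
      funext i
      show e (g i) = e (S.orderEmbOfFin hcard (σ i))
      congr 1
      show g i = ((S.orderIsoOfFin hcard) ((S.orderIsoOfFin hcard).symm ⟨g i, hmem i⟩) : Fin n)
      rw [OrderIso.apply_symm_apply]
    have hkey : wedge p V (fun i => e (g i)) =
        ((Equiv.Perm.sign σe : ℤ) : ℝ) • wedge p V (fun i => e (S.orderEmbOfFin hcard i)) := by
      apply Subtype.ext
      push_cast
      show ExteriorAlgebra.ιMulti ℝ p (fun i => e (g i)) = ((Equiv.Perm.sign σe : ℤ) : ℝ) •
        ExteriorAlgebra.ιMulti ℝ p (fun i => e (S.orderEmbOfFin hcard i))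
      rw [hcomp, AlternatingMap.map_perm, Units.smul_def]
      rw [← Int.cast_smul_eq_zsmul ℝ]
    rw [hkey]
    exact Submodule.smul_mem _ _ (Submodule.subset_span ⟨⟨S, hcard⟩, rfl⟩)
  · rw [Function.not_injective_iff] at hg
    obtain ⟨i, j, hgij, hij⟩ := hg
    have : wedge p V (fun i => e (g i)) = 0 := by
      apply Subtype.ext
      show ExteriorAlgebra.ιMulti ℝ p (fun i => e (g i)) = 0
      exact AlternatingMap.map_eq_zero_of_eq _ _ (by rw [hgij]) hij
    rw [this]
    exact Submodule.zero_mem _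

lemma fam_span {n : ℕ} (e : Basis (Fin n) ℝ V) :
    ⊤ ≤ Submodule.span ℝ (Set.range (fun s : {s : Finset (Fin n) // s.card = p} =>
      wedge p V (fun i => e (s.1.orderEmbOfFin s.2 i)))) := by
  rw [← wedge_span p]
  rw [Submodule.span_le]
  rintro _ ⟨v, rfl⟩
  rw [wedge_expand p e v]
  exact Submodule.sum_mem _ fun g _ =>
    Submodule.smul_mem _ _ (wedge_basis_vec_mem p e g)

lemma apply_evalEquiv_symm {W : Type*} [AddCommGroup W] [Module ℝ W] [Module.Finite ℝ W]
    (g : Module.Dual ℝ W) (h' : Module.Dual ℝ (Module.Dual ℝ W)) :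
    g ((Module.evalEquiv ℝ W).symm h') = h' g := by
  conv_rhs => rw [← (Module.evalEquiv ℝ W).apply_symm_apply h']
  rfl

end Aux

/-- for every symmetric bilinear form `Q` on a finite-dimensional real
vector space `V` and `p ≥ 1`, the `p`-th Gram power `G_p(Q)` lies in `A_p(V)`, i.e. it pairs
to zero with every element of `Z_p(V^*)`. -/
theorem gramPower_mem_Ap (hp : 1 ≤ p) (Q : V →ₗ[ℝ] V →ₗ[ℝ] ℝ)
    (hQ : ∀ x y : V, Q x y = Q y x) :
    gramPower p Q ∈ Ap p V := by
  refine ⟨fun x y => gramPower_symm p Q hQ x y, fun C hC => ?_⟩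
  obtain ⟨e, he⟩ := LinearMap.BilinForm.exists_orthogonal_basis
    (B := Q) ⟨fun x y => hQ x y⟩
  have hQdiag : ∀ k, Q (e k) = Q (e k) (e k) • e.coord k := by
    intro k
    apply e.ext
    intro j
    rcases eq_or_ne k j with h | h
    · subst h
      simp [Basis.coord_apply, Basis.repr_self]
    · rw [he h]
      simp [Basis.coord_apply, Basis.repr_self, Finsupp.single_apply, Ne.symm h]
  let ι := {s : Finset (Fin (Module.finrank ℝ V)) // s.card = p}
  let fam : ι → ↥(⋀[ℝ]^p V) := fun s => wedge p V (fun i => e (s.1.orderEmbOfFin s.2 i))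
  let b : Basis ι ℝ ↥(⋀[ℝ]^p V) := Basis.mk (fam_linearIndependent p e) (fam_span p e)
  unfold pairingY
  rw [LinearMap.trace_eq_matrix_trace ℝ b, Matrix.trace]
  apply Finset.sum_eq_zero
  intro s _
  rw [Matrix.diag_apply, LinearMap.toMatrix_apply]
  have hb : b s = fam s := Basis.mk_apply _ _ s
  have hcoordb : b.coord s = dualWedge p V (fun i => e.coord (s.1.orderEmbOfFin s.2 i)) := by
    apply b.ext
    intro t
    rw [Basis.coord_apply, Basis.repr_self, Basis.mk_apply, dualWedge_fam,
      Finsupp.single_apply]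
    exact if_congr eq_comm rfl rfl
  have key : (gramPower p Q) (fam s) =
      (∏ i, Q (e (s.1.orderEmbOfFin s.2 i)) (e (s.1.orderEmbOfFin s.2 i))) •
        dualWedge p V (fun i => e.coord (s.1.orderEmbOfFin s.2 i)) := by
    show (gramPower p Q) (wedge p V (fun i => e (s.1.orderEmbOfFin s.2 i))) = _
    rw [gramPower_wedge]
    rw [show (fun i => Q (e (s.1.orderEmbOfFin s.2 i))) = fun i =>
      (Q (e (s.1.orderEmbOfFin s.2 i)) (e (s.1.orderEmbOfFin s.2 i))) •
        e.coord (s.1.orderEmbOfFin s.2 i) from funext fun i => hQdiag _]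
    rw [dualWedge_smul_family]
  rw [LinearMap.comp_apply, LinearMap.comp_apply, hb, key, map_smul, map_smul,
    map_smul, Finsupp.smul_apply]
  rw [← Basis.coord_apply, hcoordb]
  erw [apply_evalEquiv_symm]
  rw [hC.2 (fun i => e.coord (s.1.orderEmbOfFin s.2 i))]
  simp
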